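/- For all x, y ∈ ℝ and all n ≥ 0, the pseudo-distance satisfies d̃(fⁿ(x), fⁿ(y)) = (∏_{i=0}^{n−1} f′(f^i(x))) · d̃(x, y), where fⁿ denotes the n-th iterate of f. -/

import Mathlib

open Filter Function

/-! The density `ρ` is a multiplicative cocycle: shifting the infinite product by one step of `f`
peels off its first factor, so `ρ (f a) (f z) = f' a / f' z * ρ a z`. Substituting `z ↦ f z` in
`d̃(f a, f b)`, the Jacobian `f' z` cancels the denominator and leaves `f' a * d̃(a, b)`;
induction on `n` gives the product formula. -/

section Cocycle

variable {α M : Type*} [CommMonoid M] {f φ : α → α}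

theorem prod_Icc_iterate_leftInverse_succ (hφ : LeftInverse φ f) (u : α → α → M) (a b : α)
    (N : ℕ) :
    ∏ n ∈ Finset.Icc 1 (N + 1), u (φ^[n] (f a)) (φ^[n] (f b)) =
      u a b * ∏ n ∈ Finset.Icc 1 N, u (φ^[n] a) (φ^[n] b) := by
  have hshift : ∀ (c : α) (n : ℕ), φ^[n + 1] (f c) = φ^[n] c := fun c n => by
    rw [iterate_succ_apply, hφ c]
  induction N with
  | zero => simp [hφ a, hφ b]
  | succ N ih =>
    rw [Finset.prod_Icc_succ_top (by omega), ih, Finset.prod_Icc_succ_top (by omega),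
      hshift a, hshift b, mul_assoc]

theorem eq_mul_of_tendsto_prod_Icc_iterate [TopologicalSpace M] [ContinuousMul M] [T2Space M]
    (hφ : LeftInverse φ f) (u ρ : α → α → M)
    (hρ : ∀ x y, Tendsto (fun N : ℕ => ∏ n ∈ Finset.Icc 1 N, u (φ^[n] x) (φ^[n] y))
      atTop (nhds (ρ x y)))
    (a b : α) : ρ (f a) (f b) = u a b * ρ a b := by
  have hshifted := (hρ (f a) (f b)).comp (tendsto_add_atTop_nat 1)
  simp only [comp_def, prod_Icc_iterate_leftInverse_succ hφ] at hshifted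
  exact tendsto_nhds_unique hshifted ((hρ a b).const_mul _)

end Cocycle

section PseudoDistance

variable {f f' : ℝ → ℝ} {ρ : ℝ → ℝ → ℝ}

theorem integral_comp_eq_mul_of_cocycle (hf : ∀ x, HasDerivAt f (f' x) x) (hf' : ∀ x, 0 < f' x)
    (hρ : ∀ a b, ρ (f a) (f b) = f' a / f' b * ρ a b) (a b : ℝ) :
    ∫ z in f a..f b, ρ (f a) z = f' a * ∫ z in a..b, ρ a z := by
  rw [← intervalIntegral.integral_comp_mul_deriv_of_deriv_nonneg
      (fun x _ => (hf x).continuousAt.continuousWithinAt) (fun x _ => hf x)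
      (fun x _ => (hf' x).le),
    ← intervalIntegral.integral_const_mul]
  refine intervalIntegral.integral_congr fun z _ => ?_
  rw [comp_apply, hρ, div_mul_eq_mul_div, div_mul_cancel₀ _ (hf' z).ne']

theorem integral_iterate_eq_prod_mul_of_cocycle (hf : ∀ x, HasDerivAt f (f' x) x)
    (hf' : ∀ x, 0 < f' x) (hρ : ∀ a b, ρ (f a) (f b) = f' a / f' b * ρ a b) (a b : ℝ)
    (n : ℕ) :
    ∫ z in f^[n] a..f^[n] b, ρ (f^[n] a) z =
      (∏ i ∈ Finset.range n, f' (f^[i] a)) * ∫ z in a..b, ρ a z := by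
  induction n with
  | zero => simp
  | succ n ih =>
    rw [iterate_succ_apply', iterate_succ_apply', integral_comp_eq_mul_of_cocycle hf hf' hρ, ih,
      Finset.prod_range_succ, mul_comm _ (f' _), mul_assoc]

end PseudoDistance

theorem stmt8_general
    (f : ℝ → ℝ)
    (hdiff : Differentiable ℝ f)
    (lamm lamp : ℝ) (hlamm : 1 < lamm)
    (hderiv : ∀ x : ℝ, lamm ≤ deriv f x ∧ deriv f x ≤ lamp)
    (ρ : ℝ → ℝ → ℝ)
    (hρ : ∀ x y : ℝ,
      Filter.Tendsto
        (fun N : ℕ => ∏ n ∈ Finset.Icc 1 N,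
          deriv f ((Function.invFun f)^[n] x) / deriv f ((Function.invFun f)^[n] y))
        Filter.atTop (nhds (ρ x y))) :
    ∀ (x y : ℝ) (n : ℕ),
      (∫ z in (f^[n] x)..(f^[n] y), ρ (f^[n] x) z) =
        (∏ i ∈ Finset.range n, deriv f (f^[i] x)) * ∫ z in x..y, ρ x z := by
  have hpos : ∀ z, 0 < deriv f z := fun z => by linarith [(hderiv z).1]
  have hinv : LeftInverse (invFun f) f :=
    leftInverse_invFun (strictMono_of_deriv_pos hpos).injective
  exact integral_iterate_eq_prod_mul_of_cocycle (fun x => (hdiff x).hasDerivAt) hpos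
    (eq_mul_of_tendsto_prod_Icc_iterate hinv (fun p q => deriv f p / deriv f q) ρ hρ)

/-- For a differentiable bijection `f : ℝ → ℝ` with α-Hölder
derivative satisfying `1 < λ₋ ≤ f′ ≤ λ₊`, the pseudo-distance
`d̃(x, y) = ∫_x^y ρ_x(z) dz` satisfies
`d̃(fⁿ(x), fⁿ(y)) = (∏_{i=0}^{n−1} f′(fⁱ(x)))·d̃(x, y)` for all `n ≥ 0`. -/
theorem stmt8
    (f : ℝ → ℝ) (hbij : Function.Bijective f)
    (hdiff : Differentiable ℝ f)
    (H α : ℝ) (hH : 0 ≤ H) (hα0 : 0 < α) (hα1 : α ≤ 1)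
    (hHolder : ∀ x y : ℝ, |deriv f x - deriv f y| ≤ H * |x - y| ^ α)
    (lamm lamp : ℝ) (hlamm : 1 < lamm)
    (hderiv : ∀ x : ℝ, lamm ≤ deriv f x ∧ deriv f x ≤ lamp)
    (ρ : ℝ → ℝ → ℝ)
    (hρ : ∀ x y : ℝ,
      Filter.Tendsto
        (fun N : ℕ => ∏ n ∈ Finset.Icc 1 N,
          deriv f ((Function.invFun f)^[n] x) / deriv f ((Function.invFun f)^[n] y))
        Filter.atTop (nhds (ρ x y))) :
    ∀ (x y : ℝ) (n : ℕ),
      (∫ z in (f^[n] x)..(f^[n] y), ρ (f^[n] x) z) =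
        (∏ i ∈ Finset.range n, deriv f (f^[i] x)) * ∫ z in x..y, ρ x z :=
  stmt8_general f hdiff lamm lamp hlamm hderiv ρ hρ
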